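/- Consider the iterated local max algorithm on a finite simple graph G with m edges, where in each round the surviving edges are ranked by an independent, uniformly random linear order (fresh random tie-breaking each round). Then for every k ≥ 0, the expected number of surviving edges satisfies E[|E(G_k)|] ≤ m · 2^{-k}. -/

import Mathlib

open Classical

/-- Two edges of a graph share an endpoint. -/
def shareEndpoint {V : Type*} (e f : Sym2 V) : Prop := ∃ v, v ∈ e ∧ v ∈ f

variable {V : Type*} [Fintype V] [DecidableEq V]

/-- A ranking of the edges of `G`: a bijection `E(G) ≃ {1, …, m}`. A uniformly
random such ranking induces a uniformly random linear order on any subset of the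
edges, in particular on the surviving edges of any round. -/
abbrev EdgeRanking (G : SimpleGraph V) [DecidableRel G.Adj] : Type _ :=
  {e : Sym2 V // e ∈ G.edgeFinset} ≃ Fin G.edgeFinset.card

/-- The rank of an edge under a ranking (arbitrary value on non-edges). -/
noncomputable def rk (G : SimpleGraph V) [DecidableRel G.Adj] (σ : EdgeRanking G)
    (e : Sym2 V) : ℕ :=
  if h : e ∈ G.edgeFinset then (σ ⟨e, h⟩ : ℕ) else 0

/-- An edge `e` of the surviving subgraph with edge set `E` is locally maximal under
the ranking `σ`: `e ∈ E` and the rank of `e` is larger than the rank of any other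
edge of `E` sharing an endpoint with `e`. -/
def locMaxInR (G : SimpleGraph V) [DecidableRel G.Adj] (σ : EdgeRanking G)
    (E : Finset (Sym2 V)) (e : Sym2 V) : Prop :=
  e ∈ E ∧ ∀ f ∈ E, f ≠ e → shareEndpoint e f → rk G σ f < rk G σ e

/-- One round of the local max algorithm under the ranking `σ`: remove every edge
sharing an endpoint with some locally maximal edge (including the locally maximal
edges themselves). -/
noncomputable def stepR (G : SimpleGraph V) [DecidableRel G.Adj] (σ : EdgeRanking G)
    (E : Finset (Sym2 V)) : Finset (Sym2 V) :=
  E.filter fun f => ¬ ∃ e, locMaxInR G σ E e ∧ shareEndpoint e f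

/-- The edge set of the graph `G_k` after `k` rounds of the iterated local max
algorithm, where round `i` uses the fresh random ranking `σs i`. -/
noncomputable def EseqR (G : SimpleGraph V) [DecidableRel G.Adj]
    (σs : ℕ → EdgeRanking G) : ℕ → Finset (Sym2 V)
  | 0 => G.edgeFinset
  | n + 1 => stepR G (σs n) (EseqR G σs n)

/-- Extend a finite tuple of rankings to an infinite sequence (rounds `≥ k` get a
fixed dummy ranking; they are irrelevant for the first `k` rounds). -/
noncomputable def pad (G : SimpleGraph V) [DecidableRel G.Adj] {k : ℕ}
    (σs : Fin k → EdgeRanking G) : ℕ → EdgeRanking G := fun i =>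
  if h : i < k then σs ⟨i, h⟩ else Fintype.equivFinOfCardEq (Fintype.card_coe _)

/-!
Fix the surviving edge set `E` and let `N[e]` be the set of edges of `E` meeting `e`. Under a
uniform ranking, each edge of `N[e]` is equally likely to be the top-ranked one, so `e` is locally
maximal with probability `1 / |N[e]|`. A locally maximal edge removes all of `N[e]`, and an edge
is removed by at most two locally maximal ones (they form a matching), hence
`2 · E[#removed] ≥ E[∑_{e locally maximal} |N[e]|] = |E|`. Thus each round halves the expected
number of edges, and the bound follows by induction on `k`.
-/

open Finset

section Rankings

variable {α β : Type*} [Fintype α] [DecidableEq α] [Fintype β] [DecidableEq β] [LinearOrder β]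

def rankingsMaxAt (s : Finset α) (a : α) : Finset (α ≃ β) :=
  {σ | ∀ b ∈ s, b ≠ a → σ b < σ a}

lemma disjoint_rankingsMaxAt {s : Finset α} {a b : α} (ha : a ∈ s) (hb : b ∈ s) (hab : a ≠ b) :
    Disjoint (rankingsMaxAt (β := β) s a) (rankingsMaxAt s b) := by
  simp only [rankingsMaxAt, disjoint_left, mem_filter, mem_univ, true_and]
  intro σ hσa hσb
  exact lt_asymm (hσa b hb hab.symm) (hσb a ha hab)

lemma biUnion_rankingsMaxAt {s : Finset α} (hs : s.Nonempty) :
    s.biUnion (rankingsMaxAt (β := β) s) = univ := by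
  refine eq_univ_of_forall fun σ => ?_
  obtain ⟨a, ha, hmax⟩ := s.exists_max_image σ hs
  simp only [mem_biUnion, rankingsMaxAt, mem_filter, mem_univ, true_and]
  exact ⟨a, ha, fun b hb hba => (hmax b hb).lt_of_ne (σ.injective.ne hba)⟩

lemma swap_trans_mem_rankingsMaxAt {s : Finset α} {a b : α} (ha : a ∈ s) {σ : α ≃ β}
    (hσ : σ ∈ rankingsMaxAt s b) : (Equiv.swap a b).trans σ ∈ rankingsMaxAt s a := by
  simp only [rankingsMaxAt, mem_filter, mem_univ, true_and, Equiv.trans_apply,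
    Equiv.swap_apply_left] at hσ ⊢
  intro c hc hca
  by_cases hcb : c = b
  · subst hcb
    rw [Equiv.swap_apply_right]
    exact hσ a ha fun h => hca h.symm
  · rw [Equiv.swap_apply_of_ne_of_ne hca hcb]
    exact hσ c hc hcb

lemma card_rankingsMaxAt_eq {s : Finset α} {a b : α} (ha : a ∈ s) (hb : b ∈ s) :
    #(rankingsMaxAt (β := β) s a) = #(rankingsMaxAt (β := β) s b) := by
  have hinv (σ : α ≃ β) : (Equiv.swap a b).trans ((Equiv.swap a b).trans σ) = σ := by
    ext; simp only [Equiv.trans_apply, Equiv.swap_apply_self]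
  refine card_nbij' ((Equiv.swap a b).trans ·) ((Equiv.swap a b).trans ·) ?_ ?_
    (fun σ _ => hinv σ) (fun σ _ => hinv σ)
  · intro σ hσ
    rw [Equiv.swap_comm]
    exact swap_trans_mem_rankingsMaxAt hb hσ
  · exact fun σ hσ => swap_trans_mem_rankingsMaxAt ha hσ

theorem card_mul_card_rankingsMaxAt {s : Finset α} {a : α} (ha : a ∈ s) :
    #s * #(rankingsMaxAt (β := β) s a) = Fintype.card (α ≃ β) := by
  rw [← card_univ, ← biUnion_rankingsMaxAt ⟨a, ha⟩,
    card_biUnion fun b hb c hc hbc => disjoint_rankingsMaxAt hb hc hbc,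
    sum_congr rfl fun b hb => card_rankingsMaxAt_eq hb ha, sum_const, smul_eq_mul]

end Rankings

section Matching

variable {α : Type*}

lemma shareEndpoint_self (e : Sym2 α) : shareEndpoint e e := by
  induction e using Sym2.ind with
  | _ a b => exact ⟨a, Sym2.mem_mk_left a b, Sym2.mem_mk_left a b⟩

lemma card_filter_shareEndpoint_le_two {M : Finset (Sym2 α)}
    (hM : ∀ e₁ ∈ M, ∀ e₂ ∈ M, ∀ v, v ∈ e₁ → v ∈ e₂ → e₁ = e₂) (f : Sym2 α) :
    #{e ∈ M | shareEndpoint e f} ≤ 2 := by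
  induction f using Sym2.ind with
  | _ x y =>
    have hle_one (v : α) : #{e ∈ M | v ∈ e} ≤ 1 := by
      refine card_le_one.2 fun a ha b hb => ?_
      rw [mem_filter] at ha hb
      exact hM a ha.1 b hb.1 v ha.2 hb.2
    have hsub : {e ∈ M | shareEndpoint e s(x, y)} ⊆ {e ∈ M | x ∈ e} ∪ {e ∈ M | y ∈ e} := by
      intro e he
      obtain ⟨heM, v, hve, hvxy⟩ := mem_filter.1 he
      rcases Sym2.mem_iff.1 hvxy with rfl | rfl <;> simp [heM, hve]
    calc #{e ∈ M | shareEndpoint e s(x, y)}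
        ≤ #{e ∈ M | x ∈ e} + #{e ∈ M | y ∈ e} := (card_le_card hsub).trans (card_union_le _ _)
      _ ≤ 2 := by linarith [hle_one x, hle_one y]

end Matching

section LocalMax

variable {G : SimpleGraph V} [DecidableRel G.Adj] {σ : EdgeRanking G} {E : Finset (Sym2 V)}

lemma eq_of_locMaxInR_of_mem {e₁ e₂ : Sym2 V} {v : V} (h₁ : locMaxInR G σ E e₁)
    (h₂ : locMaxInR G σ E e₂) (hv₁ : v ∈ e₁) (hv₂ : v ∈ e₂) : e₁ = e₂ := by
  by_contra hne
  exact lt_asymm (h₁.2 e₂ h₂.1 (Ne.symm hne) ⟨v, hv₁, hv₂⟩) (h₂.2 e₁ h₁.1 hne ⟨v, hv₂, hv₁⟩)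

lemma rk_lt_rk_iff {f e : Sym2 V} (hf : f ∈ G.edgeFinset) (he : e ∈ G.edgeFinset) :
    rk G σ f < rk G σ e ↔ σ ⟨f, hf⟩ < σ ⟨e, he⟩ := by
  simp only [rk, dif_pos hf, dif_pos he, Fin.lt_def]

lemma locMaxInR_iff_mem_rankingsMaxAt (hE : E ⊆ G.edgeFinset) {e : Sym2 V} (he : e ∈ E) :
    locMaxInR G σ E e ↔
      σ ∈ rankingsMaxAt ({f ∈ E | shareEndpoint e f}.subtype (· ∈ G.edgeFinset)) ⟨e, hE he⟩ := by
  simp only [locMaxInR, rankingsMaxAt, mem_filter, mem_univ, true_and,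
    mem_subtype, Subtype.forall, ne_eq, Subtype.mk.injEq, he]
  constructor
  · rintro h f hfG ⟨hf, hef⟩ hfe
    exact (rk_lt_rk_iff hfG (hE he)).1 (h f hf hfe hef)
  · intro h f hf hfe hef
    exact (rk_lt_rk_iff (hE hf) (hE he)).2 (h f (hE hf) ⟨hf, hef⟩ hfe)

lemma card_mul_card_filter_locMaxInR (hE : E ⊆ G.edgeFinset) {e : Sym2 V} (he : e ∈ E) :
    #{f ∈ E | shareEndpoint e f} * #{σ : EdgeRanking G | locMaxInR G σ E e} =
      Fintype.card (EdgeRanking G) := by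
  have hN : #({f ∈ E | shareEndpoint e f}.subtype (· ∈ G.edgeFinset)) =
      #{f ∈ E | shareEndpoint e f} := by
    rw [card_subtype, filter_true_of_mem fun f hf => hE (mem_filter.1 hf).1]
  have hmem : ⟨e, hE he⟩ ∈ {f ∈ E | shareEndpoint e f}.subtype (· ∈ G.edgeFinset) :=
    mem_subtype.2 (mem_filter.2 ⟨he, shareEndpoint_self e⟩)
  rw [← hN, ← card_mul_card_rankingsMaxAt hmem]
  congr 2
  ext σ
  simp only [mem_filter, mem_univ, true_and, locMaxInR_iff_mem_rankingsMaxAt hE he]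

lemma sum_sum_card_filter_locMaxInR (hE : E ⊆ G.edgeFinset) :
    ∑ σ : EdgeRanking G, ∑ e ∈ E with locMaxInR G σ E e, #{f ∈ E | shareEndpoint e f} =
      Fintype.card (EdgeRanking G) * #E := by
  simp_rw [sum_filter]
  rw [sum_comm, card_eq_sum_ones E, mul_sum, mul_one]
  refine sum_congr rfl fun e he => ?_
  rw [← sum_filter, sum_const, smul_eq_mul, mul_comm,
    card_mul_card_filter_locMaxInR hE he]

/-- The locally maximal edges form a matching, so each removed edge meets at most two of them. -/
lemma sum_card_filter_locMaxInR_le (σ : EdgeRanking G) (E : Finset (Sym2 V)) :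
    ∑ e ∈ E with locMaxInR G σ E e, #{f ∈ E | shareEndpoint e f} ≤
      2 * #(E \ stepR G σ E) := by
  set M := {e ∈ E | locMaxInR G σ E e}
  have hM : ∀ e ∈ M, locMaxInR G σ E e := fun e he => (mem_filter.1 he).2
  have hremoved (e : Sym2 V) (he : e ∈ M) :
      {f ∈ E | shareEndpoint e f} = {f ∈ E \ stepR G σ E | shareEndpoint e f} := by
    ext f
    simp only [stepR, mem_filter, mem_sdiff, not_and, not_not]
    exact ⟨fun ⟨hf, hef⟩ => ⟨⟨hf, fun _ => ⟨e, hM e he, hef⟩⟩, hef⟩, fun h => ⟨h.1.1, h.2⟩⟩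
  calc ∑ e ∈ M, #{f ∈ E | shareEndpoint e f}
      = ∑ f ∈ E \ stepR G σ E, #{e ∈ M | shareEndpoint e f} := by
        rw [sum_congr rfl fun e he => congrArg card (hremoved e he)]
        exact sum_card_bipartiteAbove_eq_sum_card_bipartiteBelow _
    _ ≤ ∑ _f ∈ E \ stepR G σ E, 2 := sum_le_sum fun f _ =>
        card_filter_shareEndpoint_le_two
          (fun e₁ h₁ e₂ h₂ v => eq_of_locMaxInR_of_mem (hM e₁ h₁) (hM e₂ h₂)) f
    _ = 2 * #(E \ stepR G σ E) := by rw [sum_const, smul_eq_mul, mul_comm]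

theorem two_mul_sum_card_stepR_le (hE : E ⊆ G.edgeFinset) :
    2 * ∑ σ : EdgeRanking G, #(stepR G σ E) ≤ Fintype.card (EdgeRanking G) * #E := by
  have hsplit (σ : EdgeRanking G) : #(E \ stepR G σ E) + #(stepR G σ E) = #E :=
    card_sdiff_add_card_eq_card (filter_subset _ _)
  have hremoved : Fintype.card (EdgeRanking G) * #E ≤
      2 * ∑ σ : EdgeRanking G, #(E \ stepR G σ E) := by
    rw [← sum_sum_card_filter_locMaxInR hE, mul_sum]
    exact sum_le_sum fun σ _ => sum_card_filter_locMaxInR_le σ E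
  have htotal : ∑ σ : EdgeRanking G, #(E \ stepR G σ E) + ∑ σ : EdgeRanking G, #(stepR G σ E) =
      Fintype.card (EdgeRanking G) * #E := by
    rw [← sum_add_distrib, sum_congr rfl fun σ _ => hsplit σ, sum_const,
      card_univ, smul_eq_mul]
  omega

end LocalMax

section Iteration

variable (G : SimpleGraph V) [DecidableRel G.Adj]

lemma EseqR_subset_edgeFinset (σs : ℕ → EdgeRanking G) (n : ℕ) : EseqR G σs n ⊆ G.edgeFinset := by
  induction n with
  | zero => exact subset_rfl
  | succ n ih => exact (filter_subset _ _).trans ih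

lemma EseqR_congr {σs τs : ℕ → EdgeRanking G} {n : ℕ} (h : ∀ i < n, σs i = τs i) :
    EseqR G σs n = EseqR G τs n := by
  induction n with
  | zero => rfl
  | succ n ih =>
    rw [EseqR, EseqR, ih fun i hi => h i (Nat.lt_succ_of_lt hi), h n (Nat.lt_succ_self n)]

lemma EseqR_pad_snoc {k : ℕ} (σs : Fin k → EdgeRanking G) (σ : EdgeRanking G) :
    EseqR G (pad G (Fin.snoc σs σ : Fin (k + 1) → EdgeRanking G)) (k + 1) =
      stepR G σ (EseqR G (pad G σs) k) := by
  have hinit : ∀ i < k, pad G (Fin.snoc σs σ : Fin (k + 1) → EdgeRanking G) i = pad G σs i := by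
    intro i hi
    simp only [pad, dif_pos (Nat.lt_succ_of_lt hi), dif_pos hi]
    exact Fin.snoc_castSucc (i := ⟨i, hi⟩) ..
  have hlast : pad G (Fin.snoc σs σ : Fin (k + 1) → EdgeRanking G) k = σ := by
    simp only [pad, dif_pos (Nat.lt_succ_self k)]
    exact Fin.snoc_last (α := fun _ => EdgeRanking G) ..
  rw [EseqR, hlast, EseqR_congr G hinit]

lemma sum_card_EseqR_pad_succ (k : ℕ) :
    ∑ σs : Fin (k + 1) → EdgeRanking G, #(EseqR G (pad G σs) (k + 1)) =
      ∑ σs : Fin k → EdgeRanking G, ∑ σ : EdgeRanking G, #(stepR G σ (EseqR G (pad G σs) k)) := by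
  rw [← (Fin.snocEquiv fun _ => EdgeRanking G).sum_comp, Fintype.sum_prod_type_right]
  exact sum_congr rfl fun σs _ => sum_congr rfl fun σ _ =>
    congrArg card (EseqR_pad_snoc G σs σ)

theorem two_pow_mul_sum_card_EseqR_pad_le (k : ℕ) :
    2 ^ k * ∑ σs : Fin k → EdgeRanking G, #(EseqR G (pad G σs) k) ≤
      Fintype.card (EdgeRanking G) ^ k * #G.edgeFinset := by
  induction k with
  | zero => simp [EseqR]
  | succ k ih =>
    set R := Fintype.card (EdgeRanking G)
    calc 2 ^ (k + 1) * ∑ σs : Fin (k + 1) → EdgeRanking G, #(EseqR G (pad G σs) (k + 1))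
        = 2 ^ k * ∑ σs : Fin k → EdgeRanking G,
            2 * ∑ σ : EdgeRanking G, #(stepR G σ (EseqR G (pad G σs) k)) := by
          rw [sum_card_EseqR_pad_succ, ← mul_sum, pow_succ, mul_assoc]
      _ ≤ 2 ^ k * ∑ σs : Fin k → EdgeRanking G, R * #(EseqR G (pad G σs) k) := by
          refine Nat.mul_le_mul_left _ (sum_le_sum fun σs _ => ?_)
          exact two_mul_sum_card_stepR_le (EseqR_subset_edgeFinset G _ k)
      _ = R * (2 ^ k * ∑ σs : Fin k → EdgeRanking G, #(EseqR G (pad G σs) k)) := by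
          rw [← mul_sum]; ring
      _ ≤ R * (R ^ k * #G.edgeFinset) := Nat.mul_le_mul_left R ih
      _ = R ^ (k + 1) * #G.edgeFinset := by ring

end Iteration

/-- Consider the iterated local max algorithm on a finite simple
graph `G` with `m` edges, where in each round the surviving edges are ranked by an
independent, uniformly random linear order. Then for every `k ≥ 0`, the expected
number of surviving edges satisfies `E[|E(G_k)|] ≤ m · 2^{-k}`. -/
theorem stmt15 (G : SimpleGraph V) [DecidableRel G.Adj] (k : ℕ) :
    (∑ σs : Fin k → EdgeRanking G, ((EseqR G (pad G σs) k).card : ℝ)) /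
        (Fintype.card (Fin k → EdgeRanking G) : ℝ) ≤
      (G.edgeFinset.card : ℝ) * (2 : ℝ)⁻¹ ^ k := by
  have hR : 0 < Fintype.card (EdgeRanking G) := Fintype.card_pos_iff.2 ⟨pad G Fin.elim0 0⟩
  have hbound : (2 : ℝ) ^ k * ∑ σs : Fin k → EdgeRanking G, ((EseqR G (pad G σs) k).card : ℝ) ≤
      (Fintype.card (EdgeRanking G) : ℝ) ^ k * G.edgeFinset.card := by
    exact_mod_cast two_pow_mul_sum_card_EseqR_pad_le G k
  rw [Fintype.card_fun, Fintype.card_fin, Nat.cast_pow, div_le_iff₀ (by positivity), inv_pow]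
  field_simp
  linarith
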